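/- Let φ be an upper invariant, lower invariant, ordinally efficient, and symmetric mechanism on 4 agents and objects {a,b,c,d}. At the profile where agents 1,2 report a ≻ b ≻ c ≻ d, agent 3 reports a ≻ b ≻ d ≻ c, and agent 4 reports a ≻ d ≻ b ≻ c, the assignment is: agents 1,2 each get (1/4, 1/3, 5/12, 0) for (a,b,c,d), agent 3 gets (1/4, 1/3, 1/6, 1/4), and agent 4 gets (1/4, 0, 0, 3/4). -/
import Mathlib


open Finset

/-- A strict preference order over `n` objects, encoded as a rank function:
`P j < P j'` means object `j` is strictly preferred to object `j'`. -/
abbrev Pref (n : ℕ) := Fin n ≃ Fin n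

/-- A (random) assignment: rows are agents, columns are objects. -/
abbrev Assignment (n : ℕ) := Fin n → Fin n → ℝ

/-- Bi-stochastic matrix: nonnegative entries, all rows and columns sum to 1. -/
def BiStochastic {n : ℕ} (x : Assignment n) : Prop :=
  (∀ i j, 0 ≤ x i j) ∧ (∀ i, ∑ j, x i j = 1) ∧ (∀ j, ∑ i, x i j = 1)

/-- A mechanism maps preference profiles to assignments. -/
abbrev Mechanism (n : ℕ) := (Fin n → Pref n) → Assignment n

/-- A mechanism always outputs bi-stochastic matrices. -/
def ValidMech {n : ℕ} (φ : Mechanism n) : Prop := ∀ P, BiStochastic (φ P)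

/-- `P'` arises from `P` by swapping the consecutively ranked objects `j ≻ j'`. -/
def AdjSwap {n : ℕ} (P P' : Pref n) (j j' : Fin n) : Prop :=
  (P j' : ℕ) = (P j : ℕ) + 1 ∧ P' = (Equiv.swap j j').trans P

/-- Upper invariance: a swap of consecutive `j ≻ j'` leaves the swapping agent's
probabilities for objects strictly preferred to `j` unchanged. -/
def UpperInvariant {n : ℕ} (φ : Mechanism n) : Prop :=
  ∀ (P : Fin n → Pref n) (i j j' : Fin n) (P' : Pref n),
    AdjSwap (P i) P' j j' →
    ∀ k, P i k < P i j → φ (Function.update P i P') i k = φ P i k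

/-- Lower invariance: a swap of consecutive `j ≻ j'` leaves the swapping agent's
probabilities for objects ranked strictly below `j'` unchanged. -/
def LowerInvariant {n : ℕ} (φ : Mechanism n) : Prop :=
  ∀ (P : Fin n → Pref n) (i j j' : Fin n) (P' : Pref n),
    AdjSwap (P i) P' j j' →
    ∀ k, P i j' < P i k → φ (Function.update P i P') i k = φ P i k

/-- Swap monotonicity: after a swap of consecutive `j ≻ j'`, either the agent's
assignment vector is unchanged, or her probability for `j` strictly decreases and
her probability for `j'` strictly increases. -/
def SwapMonotonic {n : ℕ} (φ : Mechanism n) : Prop :=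
  ∀ (P : Fin n → Pref n) (i j j' : Fin n) (P' : Pref n),
    AdjSwap (P i) P' j j' →
    φ (Function.update P i P') i = φ P i ∨
      (φ (Function.update P i P') i j < φ P i j ∧
       φ P i j' < φ (Function.update P i P') i j')

/-- `y` first order-stochastically dominates `x` at preference order `P`. -/
def FOSD {n : ℕ} (P : Pref n) (y x : Fin n → ℝ) : Prop :=
  ∀ j, ∑ k ∈ univ.filter (fun k => P k ≤ P j), x k ≤
       ∑ k ∈ univ.filter (fun k => P k ≤ P j), y k

/-- `y` strictly ordinally dominates `x` at profile `P`. -/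
def StrictDom {n : ℕ} (P : Fin n → Pref n) (y x : Assignment n) : Prop :=
  (∀ i, FOSD (P i) (y i) (x i)) ∧
  ∃ i j, ∑ k ∈ univ.filter (fun k => P i k ≤ P i j), x i k <
         ∑ k ∈ univ.filter (fun k => P i k ≤ P i j), y i k

/-- `x` is ordinally efficient at profile `P`. -/
def OrdEffAt {n : ℕ} (P : Fin n → Pref n) (x : Assignment n) : Prop :=
  ¬ ∃ y, BiStochastic y ∧ StrictDom P y x

/-- An ordinally efficient mechanism. -/
def OrdEff {n : ℕ} (φ : Mechanism n) : Prop := ∀ P, OrdEffAt P (φ P)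

/-- Symmetry (equal treatment of equals). -/
def SymmetricMech {n : ℕ} (φ : Mechanism n) : Prop :=
  ∀ P (i i' : Fin n), P i = P i' → φ P i = φ P i'

/-- Anonymity: exchanging two agents' reports exchanges their assignment vectors. -/
def Anonymous {n : ℕ} (φ : Mechanism n) : Prop :=
  ∀ P (i i' : Fin n), φ P i = φ (fun k => P (Equiv.swap i i' k)) i'

/-- Neutrality: relabeling objects via `π` relabels the assignment columns. -/
def Neutral {n : ℕ} (φ : Mechanism n) : Prop :=
  ∀ P (π : Equiv.Perm (Fin n)) (i j : Fin n),
    φ (fun k => π.symm.trans (P k)) i (π j) = φ P i j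

/-- Non-bossiness. -/
def NonBossy {n : ℕ} (φ : Mechanism n) : Prop :=
  ∀ (P : Fin n → Pref n) (i : Fin n) (P' : Pref n),
    φ (Function.update P i P') i = φ P i →
    φ (Function.update P i P') = φ P

/-- Objects: `a = 0`, `b = 1`, `c = 2`, `d = 3`. Preference orders as rank functions. -/
noncomputable def pABCD : Pref 4 := Equiv.ofBijective ![0, 1, 2, 3] (by decide)
noncomputable def pABDC : Pref 4 := Equiv.ofBijective ![0, 1, 3, 2] (by decide)
noncomputable def pADBC : Pref 4 := Equiv.ofBijective ![0, 2, 3, 1] (by decide)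
noncomputable def pBACD : Pref 4 := Equiv.ofBijective ![1, 0, 2, 3] (by decide)
noncomputable def pBADC : Pref 4 := Equiv.ofBijective ![1, 0, 3, 2] (by decide)
noncomputable def pBDCA : Pref 4 := Equiv.ofBijective ![3, 0, 2, 1] (by decide)
noncomputable def pDBCA : Pref 4 := Equiv.ofBijective ![3, 1, 2, 0] (by decide)


/-! ### Auxiliary lemmas -/

lemma sum_ite_eq_mem {n : ℕ} (s : Finset (Fin n)) (b : Fin n) (ε : ℝ) :
    ∑ k ∈ s, (if k = b then ε else 0) = if b ∈ s then ε else 0 := by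
  simp [Finset.sum_ite_eq' s b (fun _ => ε)]

lemma sum_perturb {n : ℕ} (S : Finset (Fin n)) (x y : Fin n → ℝ) (o1 o2 : Fin n) (ε : ℝ)
    (hy : ∀ k, y k = x k + ((if k = o2 then ε else 0) - (if k = o1 then ε else 0))) :
    ∑ k ∈ S, y k
      = ∑ k ∈ S, x k + ((if o2 ∈ S then ε else 0) - (if o1 ∈ S then ε else 0)) := by
  simp only [hy, Finset.sum_add_distrib, Finset.sum_sub_distrib, sum_ite_eq_mem]

lemma fosd_perturb {n : ℕ} (P : Pref n) (x y : Fin n → ℝ) (o1 o2 : Fin n) (ε : ℝ)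
    (hε : 0 ≤ ε) (h1 : P o2 < P o1)
    (hy : ∀ k, y k = x k + ((if k = o2 then ε else 0) - (if k = o1 then ε else 0))) :
    FOSD P y x := by
  intro j
  rw [sum_perturb _ x y o1 o2 ε hy]
  have himp : o1 ∈ univ.filter (fun k => P k ≤ P j) →
      o2 ∈ univ.filter (fun k => P k ≤ P j) := by
    simp only [Finset.mem_filter, Finset.mem_univ, true_and]
    intro h; exact le_of_lt (lt_of_lt_of_le h1 h)
  split_ifs with ha hb hb <;> first | linarith | exact absurd (himp hb) ha

lemma no_trade {n : ℕ} {P : Fin n → Pref n} {x : Assignment n} (hx : BiStochastic x)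
    (i1 i2 o1 o2 : Fin n) (hi : i1 ≠ i2) (ho : o1 ≠ o2)
    (h1 : P i1 o2 < P i1 o1) (h2 : P i2 o1 < P i2 o2)
    (hx1 : 0 < x i1 o1) (hx2 : 0 < x i2 o2) : ¬ OrdEffAt P x := by
  intro hOE
  set ε := min (x i1 o1) (x i2 o2) with hεdef
  have hε : 0 < ε := lt_min hx1 hx2
  have hε1 : ε ≤ x i1 o1 := min_le_left _ _
  have hε2 : ε ≤ x i2 o2 := min_le_right _ _
  set y : Assignment n := fun i j =>
    x i j + (if i = i1 then (if j = o2 then ε else 0) - (if j = o1 then ε else 0)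
             else if i = i2 then (if j = o1 then ε else 0) - (if j = o2 then ε else 0)
             else 0) with hy
  have hrow1 : ∀ j, y i1 j = x i1 j + ((if j = o2 then ε else 0) - (if j = o1 then ε else 0)) := by
    intro j; simp [hy]
  have hrow2 : ∀ j, y i2 j = x i2 j + ((if j = o1 then ε else 0) - (if j = o2 then ε else 0)) := by
    intro j; simp [hy, Ne.symm hi]
  have hrow0 : ∀ i, i ≠ i1 → i ≠ i2 → y i = x i := by
    intro i hA hB; funext j; simp [hy, hA, hB]
  apply hOE
  refine ⟨y, ⟨?_, ?_, ?_⟩, ?_, ?_⟩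
  · intro i j
    by_cases hA : i = i1
    · subst hA; rw [hrow1 j]
      have h0 := hx.1 i j
      by_cases u : j = o2
      · subst u; rw [if_pos rfl, if_neg (Ne.symm ho)]; linarith
      · rw [if_neg u]
        by_cases v : j = o1
        · subst v; rw [if_pos rfl]; linarith
        · rw [if_neg v]; linarith
    · by_cases hB : i = i2
      · subst hB; rw [hrow2 j]
        have h0 := hx.1 i j
        by_cases u : j = o1
        · subst u; rw [if_pos rfl, if_neg ho]; linarith
        · rw [if_neg u]
          by_cases v : j = o2
          · subst v; rw [if_pos rfl]; linarith
          · rw [if_neg v]; linarith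
      · rw [hrow0 i hA hB]; exact hx.1 i j
  · intro i
    by_cases hA : i = i1
    · subst hA
      rw [sum_perturb univ (x i) (y i) o1 o2 ε hrow1, hx.2.1 i]
      simp
    · by_cases hB : i = i2
      · subst hB
        rw [sum_perturb univ (x i) (y i) o2 o1 ε hrow2, hx.2.1 i]
        simp
      · rw [hrow0 i hA hB]; exact hx.2.1 i
  · intro j
    have key : ∀ i : Fin n, y i j = x i j
        + ((if i = i1 then (if j = o2 then ε else 0) - (if j = o1 then ε else 0) else 0)
         + (if i = i2 then (if j = o1 then ε else 0) - (if j = o2 then ε else 0) else 0)) := by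
      intro i
      by_cases hA : i = i1
      · subst hA; simp [hy, hi]
      · by_cases hB : i = i2 <;> simp [hy, hA, hB, Ne.symm hi]
    simp only [key, Finset.sum_add_distrib, hx.2.2 j, sum_ite_eq_mem,
      Finset.mem_univ, if_true]
    ring
  · intro i
    by_cases hA : i = i1
    · subst hA; exact fosd_perturb (P i) (x i) (y i) o1 o2 ε (le_of_lt hε) h1 hrow1
    · by_cases hB : i = i2
      · subst hB; exact fosd_perturb (P i) (x i) (y i) o2 o1 ε (le_of_lt hε) h2 hrow2
      · rw [hrow0 i hA hB]; intro j; exact le_refl _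
  · refine ⟨i1, o2, ?_⟩
    rw [sum_perturb _ (x i1) (y i1) o1 o2 ε hrow1]
    have ho2 : o2 ∈ univ.filter (fun k => P i1 k ≤ P i1 o2) := by simp
    have ho1 : o1 ∉ univ.filter (fun k => P i1 k ≤ P i1 o2) := by simp [not_le.mpr h1]
    rw [if_pos ho2, if_neg ho1]
    linarith

lemma row4 {x : Assignment 4} (hx : BiStochastic x) (i : Fin 4) :
    x i 0 + x i 1 + x i 2 + x i 3 = 1 := by
  have := hx.2.1 i; rwa [Fin.sum_univ_four] at this

lemma col4 {x : Assignment 4} (hx : BiStochastic x) (j : Fin 4) :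
    x 0 j + x 1 j + x 2 j + x 3 j = 1 := by
  have := hx.2.2 j; rwa [Fin.sum_univ_four] at this

/-! ### The chain of profiles -/

noncomputable def W0 : Fin 4 → Pref 4 := fun _ => pABCD
noncomputable def W1 : Fin 4 → Pref 4 := fun k => if k = 2 then pABDC else pABCD
noncomputable def W2 : Fin 4 → Pref 4 :=
  fun k => if k = 2 then pABDC else if k = 3 then pABDC else pABCD
noncomputable def Z1 : Fin 4 → Pref 4 := fun k => if k = 3 then pABDC else pABCD
noncomputable def Z2 : Fin 4 → Pref 4 := fun k => if k = 3 then pADBC else pABCD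
noncomputable def Vp : Fin 4 → Pref 4 :=
  fun k => if k = 2 then pABDC else if k = 3 then pADBC else pABCD

lemma swapCD : AdjSwap pABCD pABDC 2 3 := ⟨by decide, by ext x; fin_cases x <;> decide⟩
lemma swapBD : AdjSwap pABDC pADBC 1 3 := ⟨by decide, by ext x; fin_cases x <;> decide⟩

lemma updW0W1 : Function.update W0 2 pABDC = W1 := by funext k; fin_cases k <;> rfl
lemma updW1W2 : Function.update W1 3 pABDC = W2 := by funext k; fin_cases k <;> rfl
lemma updW2V : Function.update W2 3 pADBC = Vp := by funext k; fin_cases k <;> rfl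
lemma updW0Z1 : Function.update W0 3 pABDC = Z1 := by funext k; fin_cases k <;> rfl
lemma updZ1Z2 : Function.update Z1 3 pADBC = Z2 := by funext k; fin_cases k <;> rfl
lemma updZ2V : Function.update Z2 2 pABDC = Vp := by funext k; fin_cases k <;> rfl

lemma lemW0 (φ : Mechanism 4) (hV : ValidMech φ) (hS : SymmetricMech φ) :
    ∀ i j, φ W0 i j = 1 / 4 := by
  have e : ∀ i, φ W0 i = φ W0 0 := fun i => hS W0 i 0 rfl
  intro i j
  have h := col4 (hV W0) j
  rw [e 1, e 2, e 3] at h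
  rw [e i]
  linarith

lemma lemW1 (φ : Mechanism 4) (hV : ValidMech φ) (hUI : UpperInvariant φ)
    (hS : SymmetricMech φ) : φ W1 3 0 = 1 / 4 ∧ φ W1 3 1 = 1 / 4 := by
  have hu : ∀ k, W0 2 k < W0 2 2 → φ W1 2 k = φ W0 2 k := by
    intro k hk
    have := hUI W0 2 2 3 pABDC swapCD k hk
    rwa [updW0W1] at this
  have ha2 : φ W1 2 0 = 1 / 4 := by rw [hu 0 (by decide)]; exact lemW0 φ hV hS 2 0
  have hb2 : φ W1 2 1 = 1 / 4 := by rw [hu 1 (by decide)]; exact lemW0 φ hV hS 2 1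
  have e0 : φ W1 0 = φ W1 3 := hS W1 0 3 rfl
  have e1 : φ W1 1 = φ W1 3 := hS W1 1 3 rfl
  constructor
  · have h := col4 (hV W1) 0
    rw [e0, e1] at h
    linarith
  · have h := col4 (hV W1) 1
    rw [e0, e1] at h
    linarith

lemma lemW2 (φ : Mechanism 4) (hV : ValidMech φ) (hUI : UpperInvariant φ)
    (hOE : OrdEff φ) (hS : SymmetricMech φ) :
    φ W2 3 0 = 1 / 4 ∧ φ W2 3 2 = 0 := by
  have hu : ∀ k, W1 3 k < W1 3 2 → φ W2 3 k = φ W1 3 k := by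
    intro k hk
    have := hUI W1 3 2 3 pABDC swapCD k hk
    rwa [updW1W2] at this
  have ha3 : φ W2 3 0 = 1 / 4 := by rw [hu 0 (by decide)]; exact (lemW1 φ hV hUI hS).1
  have hb3 : φ W2 3 1 = 1 / 4 := by rw [hu 1 (by decide)]; exact (lemW1 φ hV hUI hS).2
  refine ⟨ha3, ?_⟩
  have e2 : φ W2 2 = φ W2 3 := hS W2 2 3 rfl
  have e1 : φ W2 1 = φ W2 0 := hS W2 1 0 rfl
  have hr3 := row4 (hV W2) 3
  have hcd := col4 (hV W2) 3
  rw [e1, e2] at hcd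
  have hnn := (hV W2).1
  by_contra h
  have hc3 : 0 < φ W2 3 2 := lt_of_le_of_ne (hnn 3 2) (Ne.symm h)
  have hd0 : 0 < φ W2 0 3 := by linarith
  exact no_trade (hV W2) 3 0 2 3 (by decide) (by decide) (by decide) (by decide)
    hc3 hd0 (hOE W2)

lemma lemZ1 (φ : Mechanism 4) (hV : ValidMech φ) (hUI : UpperInvariant φ)
    (hOE : OrdEff φ) (hS : SymmetricMech φ) :
    φ Z1 3 0 = 1 / 4 ∧ φ Z1 3 1 = 1 / 4 ∧ φ Z1 3 2 = 0 := by
  have hu : ∀ k, W0 3 k < W0 3 2 → φ Z1 3 k = φ W0 3 k := by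
    intro k hk
    have := hUI W0 3 2 3 pABDC swapCD k hk
    rwa [updW0Z1] at this
  have ha3 : φ Z1 3 0 = 1 / 4 := by rw [hu 0 (by decide)]; exact lemW0 φ hV hS 3 0
  have hb3 : φ Z1 3 1 = 1 / 4 := by rw [hu 1 (by decide)]; exact lemW0 φ hV hS 3 1
  refine ⟨ha3, hb3, ?_⟩
  have e1 : φ Z1 1 = φ Z1 0 := hS Z1 1 0 rfl
  have e2 : φ Z1 2 = φ Z1 0 := hS Z1 2 0 rfl
  have hr3 := row4 (hV Z1) 3
  have hcd := col4 (hV Z1) 3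
  rw [e1, e2] at hcd
  have hnn := (hV Z1).1
  by_contra h
  have hc3 : 0 < φ Z1 3 2 := lt_of_le_of_ne (hnn 3 2) (Ne.symm h)
  have hd0 : 0 < φ Z1 0 3 := by linarith
  exact no_trade (hV Z1) 3 0 2 3 (by decide) (by decide) (by decide) (by decide)
    hc3 hd0 (hOE Z1)

lemma lemZ2 (φ : Mechanism 4) (hV : ValidMech φ) (hUI : UpperInvariant φ)
    (hLI : LowerInvariant φ) (hOE : OrdEff φ) (hS : SymmetricMech φ) :
    φ Z2 2 0 = 1 / 4 ∧ φ Z2 2 1 = 1 / 3 := by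
  obtain ⟨hZa, hZb, hZc⟩ := lemZ1 φ hV hUI hOE hS
  have ha3 : φ Z2 3 0 = 1 / 4 := by
    have := hUI Z1 3 1 3 pADBC swapBD 0 (by decide)
    rw [updZ1Z2] at this
    rw [this]; exact hZa
  have hc3 : φ Z2 3 2 = 0 := by
    have := hLI Z1 3 1 3 pADBC swapBD 2 (by decide)
    rw [updZ1Z2] at this
    rw [this]; exact hZc
  have e1 : φ Z2 1 = φ Z2 0 := hS Z2 1 0 rfl
  have e2 : φ Z2 2 = φ Z2 0 := hS Z2 2 0 rfl
  have hr3 := row4 (hV Z2) 3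
  have hca := col4 (hV Z2) 0
  have hcb := col4 (hV Z2) 1
  have hcd := col4 (hV Z2) 3
  rw [e1, e2] at hca hcb hcd
  have hnn := (hV Z2).1
  have hβ : φ Z2 3 1 = 0 := by
    by_contra h
    have hβp : 0 < φ Z2 3 1 := lt_of_le_of_ne (hnn 3 1) (Ne.symm h)
    have hs : 0 < φ Z2 0 3 := by linarith
    exact no_trade (hV Z2) 3 0 1 3 (by decide) (by decide) (by decide) (by decide)
      hβp hs (hOE Z2)
  rw [e2]
  constructor
  · linarith
  · linarith

theorem profile_V (φ : Mechanism 4)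
    (hV : ValidMech φ) (hUI : UpperInvariant φ) (hLI : LowerInvariant φ)
    (hOE : OrdEff φ) (hS : SymmetricMech φ) :
    ∀ i : Fin 4,
      φ (fun k => if k = 2 then pABDC else if k = 3 then pADBC else pABCD) i =
        if i = 2 then ![1 / 4, 1 / 3, 1 / 6, 1 / 4]
        else if i = 3 then ![1 / 4, 0, 0, 3 / 4]
        else ![1 / 4, 1 / 3, 5 / 12, 0] := by
  have hprof : (fun k => if k = 2 then pABDC else if k = 3 then pADBC else pABCD) = Vp := rfl
  obtain ⟨hW2a, hW2c⟩ := lemW2 φ hV hUI hOE hS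
  obtain ⟨hZ2a, hZ2b⟩ := lemZ2 φ hV hUI hLI hOE hS
  -- transfer to profile V
  have hA3 : φ Vp 3 0 = 1 / 4 := by
    have := hUI W2 3 1 3 pADBC swapBD 0 (by decide)
    rw [updW2V] at this
    rw [this]; exact hW2a
  have hC3 : φ Vp 3 2 = 0 := by
    have := hLI W2 3 1 3 pADBC swapBD 2 (by decide)
    rw [updW2V] at this
    rw [this]; exact hW2c
  have hA2 : φ Vp 2 0 = 1 / 4 := by
    have := hUI Z2 2 2 3 pABDC swapCD 0 (by decide)
    rw [updZ2V] at this
    rw [this]; exact hZ2a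
  have hB2 : φ Vp 2 1 = 1 / 3 := by
    have := hUI Z2 2 2 3 pABDC swapCD 1 (by decide)
    rw [updZ2V] at this
    rw [this]; exact hZ2b
  have e1 : φ Vp 1 = φ Vp 0 := hS Vp 1 0 rfl
  have hr0 := row4 (hV Vp) 0
  have hr2 := row4 (hV Vp) 2
  have hr3 := row4 (hV Vp) 3
  have hca := col4 (hV Vp) 0
  have hcb := col4 (hV Vp) 1
  have hcc := col4 (hV Vp) 2
  have hcd := col4 (hV Vp) 3
  rw [e1] at hca hcb hcc hcd
  have hnn := (hV Vp).1
  -- step 1: agent 3 gets no b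
  have hβ : φ Vp 3 1 = 0 := by
    by_contra h
    have hβp : 0 < φ Vp 3 1 := lt_of_le_of_ne (hnn 3 1) (Ne.symm h)
    by_cases hs : 0 < φ Vp 0 3
    · exact no_trade (hV Vp) 3 0 1 3 (by decide) (by decide) (by decide) (by decide)
        hβp hs (hOE Vp)
    · have hs0 : φ Vp 0 3 = 0 := le_antisymm (not_lt.mp hs) (hnn 0 3)
      have hs2 : 0 < φ Vp 2 3 := by linarith
      exact no_trade (hV Vp) 3 2 1 3 (by decide) (by decide) (by decide) (by decide)
        hβp hs2 (hOE Vp)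
  -- step 2: agents 0,1 get no d
  have hs0 : φ Vp 0 3 = 0 := by
    by_contra h
    have hsp : 0 < φ Vp 0 3 := lt_of_le_of_ne (hnn 0 3) (Ne.symm h)
    by_cases hr : 0 < φ Vp 2 2
    · exact no_trade (hV Vp) 2 0 2 3 (by decide) (by decide) (by decide) (by decide)
        hr hsp (hOE Vp)
    · have hr2' : φ Vp 2 2 = 0 := le_antisymm (not_lt.mp hr) (hnn 2 2)
      linarith
  -- solve for the remaining entries
  have v00 : φ Vp 0 0 = 1 / 4 := by linarith
  have v01 : φ Vp 0 1 = 1 / 3 := by linarith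
  have v02 : φ Vp 0 2 = 5 / 12 := by linarith
  have v22 : φ Vp 2 2 = 1 / 6 := by linarith
  have v23 : φ Vp 2 3 = 1 / 4 := by linarith
  have v33 : φ Vp 3 3 = 3 / 4 := by linarith
  rw [hprof]
  intro i
  by_cases h2 : i = 2
  · subst h2; rw [if_pos rfl]
    funext j
    fin_cases j
    · exact hA2
    · exact hB2
    · exact v22
    · exact v23
  · rw [if_neg h2]
    by_cases h3 : i = 3
    · subst h3; rw [if_pos rfl]
      funext j
      fin_cases j
      · exact hA3
      · exact hβ
      · exact hC3
      · exact v33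
    · rw [if_neg h3]
      have hi : i = 0 ∨ i = 1 := by omega
      have hrow : φ Vp i = φ Vp 0 := by
        rcases hi with h | h <;> subst h
        · rfl
        · exact e1
      rw [hrow]
      funext j
      fin_cases j
      · exact v00
      · exact v01
      · exact v02
      · exact hs0
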